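/- arXiv:2201.10042 — 4 statements merged into one kernel-verified Lean document; each statement's English description precedes it below -/
import Mathlib

section
/- Let X and Y be independent real Gaussian random variables, each with mean 0 and variance 1/2. Then for every real t, the characteristic function of the product XY satisfies E[exp(i t X Y)] = 2/√(t² + 4). -/
open MeasureTheory ProbabilityTheory Complex Real
open scoped ENNReal NNReal

lemma gaussianPDFReal_half (x : ℝ) :
    gaussianPDFReal 0 (1/2) x = (Real.sqrt π)⁻¹ * Real.exp (-x^2) := by
  rw [gaussianPDFReal]
  norm_num
  rw [mul_comm (√π)⁻¹, ← mul_assoc, mul_inv_cancel₀ (by positivity), one_mul]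

lemma integral_gaussianHalf (f : ℝ → ℂ) :
    ∫ x, f x ∂(gaussianReal 0 (1/2))
      = ∫ x : ℝ, ((Real.sqrt π)⁻¹ * Real.exp (-x^2) : ℝ) • f x := by
  rw [gaussianReal_of_var_ne_zero 0 (by norm_num)]
  have : gaussianPDF 0 (1/2) = fun x ↦ ((gaussianPDFReal 0 (1/2) x).toNNReal : ℝ≥0∞) := rfl
  rw [this, integral_withDensity_eq_integral_smul
    ((measurable_gaussianPDFReal 0 (1/2)).real_toNNReal) f]
  congr 1 with x
  rw [NNReal.smul_def, Real.coe_toNNReal _ (gaussianPDFReal_nonneg 0 (1/2) x),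
    gaussianPDFReal_half]

lemma inner_gauss (t y : ℝ) :
    ∫ x, Complex.exp (Complex.I * t * (x * y)) ∂(gaussianReal 0 (1/2))
      = (Real.exp (-(t^2 * y^2)/4) : ℂ) := by
  rw [integral_gaussianHalf]
  have h : ∀ x : ℝ, ((Real.sqrt π)⁻¹ * Real.exp (-x^2) : ℝ) •
        Complex.exp (Complex.I * t * (x * y))
      = ((Real.sqrt π)⁻¹ : ℂ) * Complex.exp ((-1 : ℂ) * x^2 + (Complex.I * t * y) * x + 0) := by
    intro x
    rw [Complex.real_smul]
    push_cast
    rw [mul_assoc, ← Complex.exp_add]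
    congr 2
    ring
  simp_rw [h]
  rw [integral_const_mul, integral_cexp_quadratic (by norm_num : (-1 : ℂ).re < 0)]
  have h2 : ((π : ℂ) / - (-1 : ℂ)) ^ (1/2 : ℂ) = (Real.sqrt π : ℂ) := by
    rw [show ((π : ℂ) / - (-1 : ℂ)) = ((π : ℝ) : ℂ) by ring,
      Real.sqrt_eq_rpow, Complex.ofReal_cpow Real.pi_nonneg]
    norm_num
  have hs : ((Real.sqrt π : ℝ) : ℂ) ≠ 0 := by
    exact_mod_cast (Real.sqrt_pos.2 Real.pi_pos).ne'
  rw [h2, ← mul_assoc, inv_mul_cancel₀ hs, one_mul, Complex.ofReal_exp]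
  congr 1
  have hI : (Complex.I * t * y) ^ 2 = -((t^2 * y^2 : ℝ) : ℂ) := by
    push_cast
    ring_nf
    rw [Complex.I_sq]
    ring
  rw [hI]
  push_cast
  ring

/-- If `X` and `Y` are independent real Gaussian random variables, each with
mean 0 and variance 1/2, then for every real `t`, the characteristic function of the
product `X * Y` satisfies `E[exp(i t X Y)] = 2 / √(t² + 4)`. -/
theorem charFun_product_of_gaussians
    {Ω : Type*} [MeasurableSpace Ω] (μ : Measure Ω) [IsProbabilityMeasure μ]
    (X Y : Ω → ℝ)
    (hX : Measure.map X μ = gaussianReal 0 (1/2))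
    (hY : Measure.map Y μ = gaussianReal 0 (1/2))
    (hXY : IndepFun X Y μ) (t : ℝ) :
    ∫ ω, Complex.exp (Complex.I * t * (X ω * Y ω)) ∂μ
      = 2 / Real.sqrt (t ^ 2 + 4) := by
  have hXm : AEMeasurable X μ := aemeasurable_of_map_neZero (by rw [hX]; infer_instance)
  have hYm : AEMeasurable Y μ := aemeasurable_of_map_neZero (by rw [hY]; infer_instance)
  have hmap : μ.map (fun ω ↦ (X ω, Y ω))
      = (gaussianReal 0 (1/2)).prod (gaussianReal 0 (1/2)) := by
    rw [(indepFun_iff_map_prod_eq_prod_map_map hXm hYm).1 hXY, hX, hY]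
  have hcont : Continuous fun p : ℝ × ℝ ↦ Complex.exp (Complex.I * t * (p.1 * p.2)) := by
    fun_prop
  have h1 : ∫ ω, Complex.exp (Complex.I * t * (X ω * Y ω)) ∂μ
      = ∫ p : ℝ × ℝ, Complex.exp (Complex.I * t * (p.1 * p.2))
          ∂((gaussianReal 0 (1/2)).prod (gaussianReal 0 (1/2))) := by
    rw [← hmap, integral_map (hXm.prodMk hYm) hcont.aestronglyMeasurable]
  rw [h1]
  have hint : Integrable (fun p : ℝ × ℝ ↦ Complex.exp (Complex.I * t * (p.1 * p.2)))
      ((gaussianReal 0 (1/2)).prod (gaussianReal 0 (1/2))) := by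
    refine (integrable_const (1 : ℝ)).mono' hcont.aestronglyMeasurable ?_
    filter_upwards with p
    simp [Complex.norm_exp]
  rw [MeasureTheory.integral_prod _ hint]
  have hinner : ∀ x : ℝ, (∫ y, Complex.exp (Complex.I * t * (x * y)) ∂(gaussianReal 0 (1/2)))
      = (Real.exp (-(t^2 * x^2)/4) : ℂ) := by
    intro x
    rw [← inner_gauss t x]
    congr 1 with y
    ring_nf
  simp_rw [hinner]
  rw [integral_gaussianHalf]
  have h3 : ∀ x : ℝ, ((Real.sqrt π)⁻¹ * Real.exp (-x^2) : ℝ) •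
        ((Real.exp (-(t^2 * x^2)/4) : ℝ) : ℂ)
      = (((Real.sqrt π)⁻¹ * Real.exp (-(1 + t^2/4) * x^2) : ℝ) : ℂ) := by
    intro x
    have hr : (Real.sqrt π)⁻¹ * Real.exp (-x^2) * Real.exp (-(t^2 * x^2)/4)
        = (Real.sqrt π)⁻¹ * Real.exp (-(1 + t^2/4) * x^2) := by
      rw [mul_assoc, ← Real.exp_add]
      congr 2
      ring
    rw [Complex.real_smul, ← Complex.ofReal_mul, hr]
  simp_rw [h3]
  rw [show (∫ x : ℝ, (((Real.sqrt π)⁻¹ * Real.exp (-(1 + t^2/4) * x^2) : ℝ) : ℂ))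
      = (((∫ x : ℝ, (Real.sqrt π)⁻¹ * Real.exp (-(1 + t^2/4) * x^2)) : ℝ) : ℂ)
    from integral_ofReal, integral_const_mul, integral_gaussian]
  have h4 : (Real.sqrt π)⁻¹ * Real.sqrt (π / (1 + t^2/4)) = 2 / Real.sqrt (t^2 + 4) := by
    have h44 : Real.sqrt (t^2 + 4) = 2 * Real.sqrt (1 + t^2/4) := by
      rw [show t^2 + 4 = 2^2 * (1 + t^2/4) by ring,
        Real.sqrt_mul (by positivity), Real.sqrt_sq (by norm_num : (0:ℝ) ≤ 2)]
    rw [Real.sqrt_div Real.pi_nonneg, h44]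
    have h1p : (0:ℝ) < Real.sqrt (1 + t^2/4) := Real.sqrt_pos.2 (by positivity)
    have hsp : (0:ℝ) < Real.sqrt π := Real.sqrt_pos.2 Real.pi_pos
    field_simp
  rw [h4]
  push_cast
  ring
end

section
/- Let X₁, Y₁, X₂, Y₂ be independent real Gaussian random variables, each with mean 0 and variance 1/2, and let G = X₁X₂ − Y₁Y₂ (the real part of the product of the two standard complex Gaussians X₁ + iY₁ and X₂ + iY₂). Then for every real t, E[exp(i t G)] = 4/(t² + 4). -/
open MeasureTheory ProbabilityTheory Complex Real
open scoped NNReal ENNReal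

noncomputable section

namespace CharFunAux

variable {Ω : Type*} [MeasurableSpace Ω] {μ : Measure Ω}

lemma pdf_eq (x : ℝ) : gaussianPDFReal 0 (1/2) x = (Real.sqrt π)⁻¹ * Real.exp (-x^2) := by
  rw [gaussianPDFReal]
  have h1 : 2 * π * (((1:ℝ≥0)/2 : ℝ≥0) : ℝ) = π := by push_cast; ring
  have h2 : 2 * (((1:ℝ≥0)/2 : ℝ≥0) : ℝ) = 1 := by push_cast; ring
  rw [h1, h2]
  norm_num

lemma integral_gauss (g : ℝ → ℂ) :
    ∫ x, g x ∂(gaussianReal 0 (1/2))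
      = ∫ x : ℝ, ((Real.sqrt π)⁻¹ * Real.exp (-x^2) : ℝ) • g x := by
  rw [gaussianReal_of_var_ne_zero _ (by norm_num)]
  have h : gaussianPDF 0 (1/2)
      = fun x => (((gaussianPDFReal 0 (1/2) x).toNNReal : ℝ≥0) : ℝ≥0∞) := rfl
  rw [h, integral_withDensity_eq_integral_smul
    ((measurable_gaussianPDFReal 0 (1/2)).real_toNNReal) g]
  congr 1; ext x
  rw [NNReal.smul_def, Real.coe_toNNReal _ (gaussianPDFReal_nonneg _ _ _), pdf_eq]

lemma gauss_quad (b c : ℂ) (hb : b.re < 1) :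
    ∫ x : ℝ, cexp (b * x^2 + c * x) ∂(gaussianReal 0 (1/2))
      = (Real.sqrt π : ℂ)⁻¹ * (((π : ℂ) / (1 - b)) ^ (1/2 : ℂ)
          * cexp (0 - c^2 / (4 * (b - 1)))) := by
  rw [integral_gauss]
  have h1 : ∀ x : ℝ, (((Real.sqrt π)⁻¹ * Real.exp (-x^2) : ℝ)) • cexp (b * x^2 + c * x)
      = (Real.sqrt π : ℂ)⁻¹ * cexp ((b-1) * x^2 + c * x + 0) := by
    intro x
    rw [real_smul]
    push_cast
    rw [mul_assoc, ← Complex.exp_add]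
    congr 2
    ring
  simp_rw [h1]
  rw [MeasureTheory.integral_const_mul,
    integral_cexp_quadratic (show (b-1).re < 0 by simpa using sub_neg.2 hb) c 0]
  rw [neg_sub]

lemma sqrt_pi_ne : (Real.sqrt π : ℂ) ≠ 0 :=
  Complex.ofReal_ne_zero.2 (Real.sqrt_ne_zero'.2 Real.pi_pos)

lemma gauss_char (s : ℝ) :
    ∫ x : ℝ, cexp (I * s * x) ∂(gaussianReal 0 (1/2)) = cexp (-(s:ℂ)^2 / 4) := by
  have h0 : ∀ x : ℝ, cexp (I * s * x) = cexp ((0:ℂ) * x^2 + (I * s) * x) := by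
    intro x; norm_num
  simp_rw [h0]
  rw [gauss_quad 0 (I * s) (by norm_num)]
  have hpi : ((π : ℂ) / (1 - 0)) ^ (1/2 : ℂ) = (Real.sqrt π : ℂ) := by
    rw [sub_zero, div_one, show (1/2:ℂ) = ((1/2:ℝ):ℂ) by norm_num,
      ← Complex.ofReal_cpow Real.pi_pos.le]
    norm_num [Real.sqrt_eq_rpow]
  rw [hpi, ← mul_assoc, inv_mul_cancel₀ sqrt_pi_ne, one_mul]
  congr 1
  rw [mul_pow, I_sq]
  ring

lemma gauss_sq (a : ℝ) (ha : 0 ≤ a) :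
    ∫ x : ℝ, cexp (-(a:ℂ) * x^2) ∂(gaussianReal 0 (1/2))
      = (((Real.sqrt (1 + a))⁻¹ : ℝ) : ℂ) := by
  have h0 : ∀ x : ℝ, cexp (-(a:ℂ) * x^2) = cexp (-(a:ℂ) * x^2 + 0 * x) := by
    intro x; norm_num
  simp_rw [h0]
  rw [gauss_quad (-(a:ℂ)) 0 (by simp only [neg_re, ofReal_re]; linarith)]
  have h2 : ((π : ℂ) / (1 - -(a:ℂ))) ^ (1/2 : ℂ) = ((Real.sqrt (π / (1+a)) : ℝ) : ℂ) := by
    have he : (π : ℂ) / (1 - -(a:ℂ)) = ((π / (1+a) : ℝ) : ℂ) := by push_cast; ring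
    rw [he, show (1/2:ℂ) = ((1/2:ℝ):ℂ) by norm_num,
      ← Complex.ofReal_cpow (by positivity)]
    norm_num [Real.sqrt_eq_rpow]
  have h4 : cexp (0 - (0:ℂ)^2 / (4 * (-(a:ℂ) - 1))) = 1 := by norm_num
  rw [h2, h4, mul_one]
  rw [Real.sqrt_div Real.pi_pos.le]
  push_cast
  rw [div_eq_mul_inv, ← mul_assoc, inv_mul_cancel₀ sqrt_pi_ne, one_mul]

end CharFunAux

section Part2

open CharFunAux

variable {Ω : Type*} [MeasurableSpace Ω] {μ : Measure Ω}

lemma iIndepFun_ae_eq {ι : Type*} {β : ι → Type*} [m : ∀ i, MeasurableSpace (β i)]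
    {f g : ∀ i, Ω → β i} (hf : iIndepFun f μ)
    (h : ∀ i, f i =ᵐ[μ] g i) : iIndepFun g μ := by
  rw [iIndepFun_iff_measure_inter_preimage_eq_mul] at hf ⊢
  intro S sets hsets
  have hae : ∀ i : ι, (f i ⁻¹' sets i : Set Ω) =ᵐ[μ] (g i ⁻¹' sets i : Set Ω) := fun i =>
    (h i).mono fun ω hω => by
      show (f i ω ∈ sets i) = (g i ω ∈ sets i); rw [hω]
  have h1 : (⋂ i ∈ S, f i ⁻¹' sets i : Set Ω) =ᵐ[μ] (⋂ i ∈ S, g i ⁻¹' sets i : Set Ω) := by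
    have hb := (ae_ball_iff S.countable_toSet).2 fun i (_ : i ∈ (S : Set ι)) => hae i
    filter_upwards [hb] with ω hω
    have hiff : (ω ∈ ⋂ i ∈ S, f i ⁻¹' sets i) ↔ (ω ∈ ⋂ i ∈ S, g i ⁻¹' sets i) := by
      simp only [Set.mem_iInter, Set.mem_preimage]
      constructor <;> intro hmem i hi
      · exact (iff_of_eq (hω i hi)).1 (hmem i hi)
      · exact (iff_of_eq (hω i hi)).2 (hmem i hi)
    exact propext hiff
  rw [← measure_congr h1, hf S hsets]
  exact Finset.prod_congr rfl fun i _ => measure_congr (hae i)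

lemma char_prod (A B : Ω → ℝ) [IsProbabilityMeasure μ]
    (hA : Measurable A) (hB : Measurable B)
    (hmA : Measure.map A μ = gaussianReal 0 (1/2))
    (hmB : Measure.map B μ = gaussianReal 0 (1/2))
    (hAB : IndepFun A B μ) (s : ℝ) :
    ∫ ω, cexp (I * s * (A ω * B ω)) ∂μ
      = (((Real.sqrt (1 + s^2/4))⁻¹ : ℝ) : ℂ) := by
  have hcont : Continuous fun p : ℝ × ℝ => cexp (I * s * (p.1 * p.2)) := by
    fun_prop
  have hmap : μ.map (fun ω => (A ω, B ω))
      = (gaussianReal 0 (1/2)).prod (gaussianReal 0 (1/2)) := by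
    rw [(indepFun_iff_map_prod_eq_prod_map_map hA.aemeasurable hB.aemeasurable).1 hAB,
      hmA, hmB]
  have h1 : ∫ ω, cexp (I * s * (A ω * B ω)) ∂μ
      = ∫ p : ℝ × ℝ, cexp (I * s * (p.1 * p.2))
          ∂((gaussianReal 0 (1/2)).prod (gaussianReal 0 (1/2))) := by
    rw [← hmap, integral_map (hA.prodMk hB).aemeasurable hcont.aestronglyMeasurable]
  rw [h1]
  have hint : Integrable (fun p : ℝ × ℝ => cexp (I * s * (p.1 * p.2)))
      ((gaussianReal 0 (1/2)).prod (gaussianReal 0 (1/2))) := by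
    refine Integrable.mono' (integrable_const 1) hcont.aestronglyMeasurable
      (ae_of_all _ fun p => ?_)
    rw [Complex.norm_exp]
    simp
  rw [MeasureTheory.integral_prod _ hint]
  have hinner : ∀ x : ℝ, ∫ y : ℝ, cexp (I * s * (x * y)) ∂(gaussianReal 0 (1/2))
      = cexp (-(s^2/4 : ℝ) * (x:ℂ)^2) := by
    intro x
    have h0 : ∀ y : ℝ, cexp (I * s * (x * y)) = cexp (I * (s*x : ℝ) * y) := by
      intro y; push_cast; ring_nf
    simp_rw [h0, gauss_char (s*x)]
    congr 1
    push_cast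
    ring
  simp_rw [hinner]
  rw [gauss_sq (s^2/4) (by positivity)]

end Part2

/-- If `X₁, Y₁, X₂, Y₂` are independent real Gaussian random variables, each
with mean 0 and variance 1/2, and `G = X₁X₂ − Y₁Y₂` (the real part of the product of the
standard complex Gaussians `X₁ + iY₁` and `X₂ + iY₂`), then for every real `t`,
`E[exp(i t G)] = 4/(t² + 4)`. -/
theorem charFun_real_part_product_complex_gaussians
    {Ω : Type*} [MeasurableSpace Ω] (μ : Measure Ω) [IsProbabilityMeasure μ]
    (X₁ Y₁ X₂ Y₂ : Ω → ℝ)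
    (hX₁ : Measure.map X₁ μ = gaussianReal 0 (1/2))
    (hY₁ : Measure.map Y₁ μ = gaussianReal 0 (1/2))
    (hX₂ : Measure.map X₂ μ = gaussianReal 0 (1/2))
    (hY₂ : Measure.map Y₂ μ = gaussianReal 0 (1/2))
    (hIndep : iIndepFun ![X₁, Y₁, X₂, Y₂] μ)
    (t : ℝ) :
    ∫ ω, Complex.exp (Complex.I * t * (X₁ ω * X₂ ω - Y₁ ω * Y₂ ω)) ∂μ
      = 4 / (t ^ 2 + 4) := by
  have hmX₁ : AEMeasurable X₁ μ := aemeasurable_of_map_neZero (by rw [hX₁]; infer_instance)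
  have hmY₁ : AEMeasurable Y₁ μ := aemeasurable_of_map_neZero (by rw [hY₁]; infer_instance)
  have hmX₂ : AEMeasurable X₂ μ := aemeasurable_of_map_neZero (by rw [hX₂]; infer_instance)
  have hmY₂ : AEMeasurable Y₂ μ := aemeasurable_of_map_neZero (by rw [hY₂]; infer_instance)
  set X₁' := hmX₁.mk X₁ with hX₁'def
  set Y₁' := hmY₁.mk Y₁ with hY₁'def
  set X₂' := hmX₂.mk X₂ with hX₂'def
  set Y₂' := hmY₂.mk Y₂ with hY₂'def
  have heX₁ : X₁ =ᵐ[μ] X₁' := hmX₁.ae_eq_mk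
  have heY₁ : Y₁ =ᵐ[μ] Y₁' := hmY₁.ae_eq_mk
  have heX₂ : X₂ =ᵐ[μ] X₂' := hmX₂.ae_eq_mk
  have heY₂ : Y₂ =ᵐ[μ] Y₂' := hmY₂.ae_eq_mk
  have hInt : ∫ ω, cexp (I * t * (X₁ ω * X₂ ω - Y₁ ω * Y₂ ω)) ∂μ
      = ∫ ω, cexp (I * t * (X₁' ω * X₂' ω - Y₁' ω * Y₂' ω)) ∂μ := by
    apply integral_congr_ae
    filter_upwards [heX₁, heY₁, heX₂, heY₂] with ω h1 h2 h3 h4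
    rw [h1, h2, h3, h4]
  rw [hInt]
  have hX₁' : Measure.map X₁' μ = gaussianReal 0 (1/2) := by
    rw [← Measure.map_congr heX₁, hX₁]
  have hY₁' : Measure.map Y₁' μ = gaussianReal 0 (1/2) := by
    rw [← Measure.map_congr heY₁, hY₁]
  have hX₂' : Measure.map X₂' μ = gaussianReal 0 (1/2) := by
    rw [← Measure.map_congr heX₂, hX₂]
  have hY₂' : Measure.map Y₂' μ = gaussianReal 0 (1/2) := by
    rw [← Measure.map_congr heY₂, hY₂]
  have hIndep' : iIndepFun ![X₁', Y₁', X₂', Y₂'] μ := by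
    refine iIndepFun_ae_eq hIndep fun i => ?_
    fin_cases i
    · simpa using heX₁
    · simpa using heY₁
    · simpa using heX₂
    · simpa using heY₂
  have hmeas : ∀ i, Measurable (![X₁', Y₁', X₂', Y₂'] i) := by
    intro i
    fin_cases i
    · exact hmX₁.measurable_mk
    · exact hmY₁.measurable_mk
    · exact hmX₂.measurable_mk
    · exact hmY₂.measurable_mk
  set G₁ : Ω → ℝ := fun ω => X₁' ω * X₂' ω with hG₁def
  set G₂ : Ω → ℝ := fun ω => Y₁' ω * Y₂' ω with hG₂def
  have hG₁m : Measurable G₁ := hmX₁.measurable_mk.mul hmX₂.measurable_mk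
  have hG₂m : Measurable G₂ := hmY₁.measurable_mk.mul hmY₂.measurable_mk
  have hGindep : IndepFun G₁ G₂ μ := by
    have := hIndep'.indepFun_mul_mul hmeas 0 2 1 3 (by decide) (by decide) (by decide)
      (by decide)
    simp at this
    exact this
  have hX12indep : IndepFun X₁' X₂' μ := by
    have := hIndep'.indepFun (i := 0) (j := 2) (by decide)
    simpa using this
  have hY12indep : IndepFun Y₁' Y₂' μ := by
    have := hIndep'.indepFun (i := 1) (j := 3) (by decide)
    simpa using this
  have hsplit : ∀ ω, cexp (I * t * (X₁' ω * X₂' ω - Y₁' ω * Y₂' ω))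
      = cexp (I * t * (G₁ ω)) * cexp (I * ((-t : ℝ)) * (G₂ ω)) := by
    intro ω
    rw [← Complex.exp_add]
    congr 1
    simp only [hG₁def, hG₂def]
    push_cast
    ring
  simp_rw [hsplit]
  have hmapG : μ.map (fun ω => (G₁ ω, G₂ ω)) = (μ.map G₁).prod (μ.map G₂) :=
    (indepFun_iff_map_prod_eq_prod_map_map hG₁m.aemeasurable hG₂m.aemeasurable).1 hGindep
  have hcont : Continuous fun p : ℝ × ℝ => cexp (I * t * p.1) * cexp (I * ((-t : ℝ)) * p.2) :=
    by fun_prop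
  have h2 : ∫ ω, cexp (I * t * (G₁ ω)) * cexp (I * ((-t : ℝ)) * (G₂ ω)) ∂μ
      = ∫ p : ℝ × ℝ, cexp (I * t * p.1) * cexp (I * ((-t : ℝ)) * p.2)
          ∂((μ.map G₁).prod (μ.map G₂)) := by
    rw [← hmapG, integral_map (hG₁m.prodMk hG₂m).aemeasurable hcont.aestronglyMeasurable]
  rw [h2, integral_prod_mul (fun a : ℝ => cexp (I * t * a)) (fun b : ℝ => cexp (I * (-t : ℝ) * b))]
  have h3 : ∫ a : ℝ, cexp (I * t * a) ∂(μ.map G₁) = ∫ ω, cexp (I * t * (G₁ ω)) ∂μ := by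
    rw [integral_map hG₁m.aemeasurable (by fun_prop : Continuous fun a : ℝ =>
      cexp (I * t * a)).aestronglyMeasurable]
  have h4 : ∫ b : ℝ, cexp (I * (-t : ℝ) * b) ∂(μ.map G₂)
      = ∫ ω, cexp (I * (-t : ℝ) * (G₂ ω)) ∂μ := by
    rw [integral_map hG₂m.aemeasurable (by fun_prop : Continuous fun b : ℝ =>
      cexp (I * (-t : ℝ) * b)).aestronglyMeasurable]
  have hG1cast : ∀ ω, ((G₁ ω : ℝ) : ℂ) = (X₁' ω : ℂ) * (X₂' ω : ℂ) := by
    intro ω; simp only [hG₁def]; push_cast; ring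
  have hG2cast : ∀ ω, ((G₂ ω : ℝ) : ℂ) = (Y₁' ω : ℂ) * (Y₂' ω : ℂ) := by
    intro ω; simp only [hG₂def]; push_cast; ring
  rw [h3, h4]
  simp_rw [hG1cast, hG2cast]
  rw [char_prod X₁' X₂' hmX₁.measurable_mk hmX₂.measurable_mk hX₁' hX₂' hX12indep t,
    char_prod Y₁' Y₂' hmY₁.measurable_mk hmY₂.measurable_mk hY₁' hY₂' hY12indep (-t)]
  have hneg : (-t)^2 = t^2 := by ring
  rw [hneg, ← Complex.ofReal_mul, ← mul_inv, Real.mul_self_sqrt (by positivity)]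
  have hr : (1 + t^2/4)⁻¹ = 4/(t^2+4) := by
    have h5 : t^2 + 4 > 0 := by positivity
    field_simp
    ring
  rw [hr]
  push_cast
  ring

end
end

section
/- Let X and Y be independent real Gaussian random variables, each with mean 0 and variance 1/2. Then the law of the product XY is absolutely continuous with respect to Lebesgue measure, with density q₁(x) = (2/π) ∫₀^∞ exp(−2|x| cosh u) du for every x ≠ 0 (this equals (2/π)K₀(2|x|) where K₀ is the modified Bessel function of the second kind). -/
/-!
The law of `XY` is the multiplicative convolution `N(0,1/2) ∗ₘ N(0,1/2)`. Given `X = t ≠ 0`, the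
product `tY` has density `|t|⁻¹ g(x/t)`, where `g(y) = π^{-1/2} e^{-y²}`; integrating over `t`,
`XY` has density `π⁻¹ ∫ exp(-t² - x²/t²) dt/|t|`. By evenness and the substitution
`t = √|x| e^{w/2}`, which turns `t² + x²/t²` into `2|x| cosh w` and `dt/t` into `dw/2`, this equals
`(2/π) ∫₀^∞ exp(-2|x| cosh w) dw`. The computation is carried out with lower Lebesgue integrals,
so integrability is needed only once, to pass to the Bochner integral at the end.
-/

open MeasureTheory ProbabilityTheory
open scoped ENNReal NNReal
open Real Set

theorem lintegral_comp_abs (f : ℝ → ℝ≥0∞) :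
    ∫⁻ x, f |x| = 2 * ∫⁻ x in Ioi 0, f x := by
  have h_pos : ∫⁻ x in Ioi 0, f |x| = ∫⁻ x in Ioi 0, f x :=
    setLIntegral_congr_fun measurableSet_Ioi fun x hx => by rw [abs_of_pos hx]
  have h_neg : ∫⁻ x in Iic 0, f |x| = ∫⁻ x in Ioi 0, f x := by
    have := (Measure.measurePreserving_neg (volume : Measure ℝ)).setLIntegral_comp_preimage_emb
      (Homeomorph.neg ℝ).measurableEmbedding (fun x => f |x|) (Ici 0)
    simp only [abs_neg, neg_preimage, neg_Ici, neg_zero] at this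
    rw [this, setLIntegral_congr Ioi_ae_eq_Ici.symm, h_pos]
  rw [← setLIntegral_univ, ← Iic_union_Ioi (a := 0),
    lintegral_union measurableSet_Ioi (Iic_disjoint_Ioi le_rfl), h_neg, h_pos, two_mul]

theorem integrableOn_exp_neg_mul_cosh {c : ℝ} (hc : 0 < c) :
    IntegrableOn (fun u => exp (-c * cosh u)) (Ioi 0) := by
  refine (exp_neg_integrableOn_Ioi 0 hc).mono' (by fun_prop) ?_
  filter_upwards [ae_restrict_mem measurableSet_Ioi] with u (hu : 0 < u)
  have : u < cosh u := (self_lt_sinh_iff.2 hu).trans (sinh_lt_cosh u)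
  rw [norm_of_nonneg (exp_pos _).le, exp_le_exp]
  nlinarith

theorem lintegral_Ioi_exp_neg_sq_sub_sq_div_sq_div {a : ℝ} (ha : 0 < a) :
    ∫⁻ t in Ioi 0, ENNReal.ofReal (exp (-t ^ 2 - a ^ 2 / t ^ 2) / t)
      = 2⁻¹ * ∫⁻ w, ENNReal.ofReal (exp (-(2 * a) * cosh w)) := by
  set φ : ℝ → ℝ := fun w => √a * exp (w / 2)
  have hφ_deriv : ∀ w ∈ univ, HasDerivWithinAt φ (φ w / 2) univ w := fun w _ => by
    refine (((hasDerivAt_id w).div_const 2).exp.const_mul √a).hasDerivWithinAt.congr_deriv ?_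
    simp only [φ, id]; ring
  have hφ_inj : InjOn φ univ := fun x _ y _ h => by
    simpa [φ, (sqrt_pos.2 ha).ne'] using h
  have hφ_range : φ '' univ = Ioi 0 := by
    refine Subset.antisymm (image_subset_iff.2 fun w _ => ?_) fun t (ht : 0 < t) => ?_
    · simp only [φ, mem_preimage, mem_Ioi]
      positivity
    · refine ⟨2 * log (t / √a), trivial, ?_⟩
      change √a * exp (2 * log (t / √a) / 2) = t
      rw [mul_div_cancel_left₀ _ two_ne_zero, exp_log (div_pos ht (sqrt_pos.2 ha))]
      field_simp
  rw [← hφ_range, lintegral_image_eq_lintegral_abs_deriv_mul MeasurableSet.univ hφ_deriv hφ_inj,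
    setLIntegral_univ, ← lintegral_const_mul' _ _ (by simp)]
  refine lintegral_congr fun w => ?_
  have hφ_pos : 0 < φ w := by positivity
  have hφ_sq : φ w ^ 2 = a * exp w := by
    rw [mul_pow, sq_sqrt ha.le, ← exp_nat_mul]
    norm_num [mul_div_cancel₀]
  have h_exponent : -φ w ^ 2 - a ^ 2 / φ w ^ 2 = -(2 * a) * cosh w := by
    rw [hφ_sq, cosh_eq, exp_neg]
    field_simp
    ring
  rw [abs_of_pos (half_pos hφ_pos), ← ENNReal.ofReal_mul (half_pos hφ_pos).le, h_exponent,
    ← ENNReal.ofReal_ofNat 2, ← ENNReal.ofReal_inv_of_pos two_pos,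
    ← ENNReal.ofReal_mul (by norm_num)]
  congr 1
  field_simp

theorem lintegral_exp_neg_sq_sub_sq_div_sq_div_abs {a : ℝ} (ha : 0 < a) :
    ∫⁻ t, ENNReal.ofReal (exp (-t ^ 2 - a ^ 2 / t ^ 2) / |t|)
      = 2 * ∫⁻ u in Ioi 0, ENNReal.ofReal (exp (-(2 * a) * cosh u)) := by
  have h_even_t := lintegral_comp_abs fun t => ENNReal.ofReal (exp (-t ^ 2 - a ^ 2 / t ^ 2) / t)
  have h_even_u := lintegral_comp_abs fun u => ENNReal.ofReal (exp (-(2 * a) * cosh u))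
  simp only [sq_abs, cosh_abs] at h_even_t h_even_u
  rw [h_even_t, lintegral_Ioi_exp_neg_sq_sub_sq_div_sq_div ha, h_even_u, ← mul_assoc,
    ENNReal.mul_inv_cancel two_ne_zero ENNReal.ofNat_ne_top, one_mul]

theorem map_const_mul_withDensity {g : ℝ → ℝ≥0∞} (hg : Measurable g) {t : ℝ} (ht : t ≠ 0) :
    (volume.withDensity g).map (t * ·)
      = volume.withDensity fun x => ENNReal.ofReal |t⁻¹| * g (t⁻¹ * x) := by
  ext s hs
  rw [Measure.map_apply (measurable_const_mul t) hs, withDensity_apply _ hs,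
    withDensity_apply _ (measurable_const_mul t hs),
    lintegral_const_mul' _ _ ENNReal.ofReal_ne_top, ← smul_eq_mul, ← lintegral_smul_measure,
    ← Measure.restrict_smul, ← Real.map_volume_mul_left ht,
    setLIntegral_map hs (f := fun x => g (t⁻¹ * x)) (by fun_prop) (measurable_const_mul t)]
  simp only [inv_mul_cancel_left₀ ht]

theorem mconv_volume_withDensity {ρ : Measure ℝ} [SFinite ρ] (hρ : ρ {0} = 0) {g : ℝ → ℝ≥0∞}
    (hg : Measurable g) :
    ρ ∗ₘ volume.withDensity g
      = volume.withDensity fun x => ∫⁻ t, ENNReal.ofReal |t⁻¹| * g (t⁻¹ * x) ∂ρ := by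
  ext s hs
  rw [Measure.mconv, Measure.map_apply measurable_mul hs, Measure.prod_apply (measurable_mul hs),
    withDensity_apply _ hs]
  calc ∫⁻ t, volume.withDensity g (Prod.mk t ⁻¹' ((fun p : ℝ × ℝ => p.1 * p.2) ⁻¹' s)) ∂ρ
      = ∫⁻ t, ∫⁻ x in s, ENNReal.ofReal |t⁻¹| * g (t⁻¹ * x) ∂volume ∂ρ := by
        refine lintegral_congr_ae ?_
        filter_upwards [measure_eq_zero_iff_ae_notMem.1 hρ] with t (ht : t ≠ 0)
        rw [← withDensity_apply _ hs, ← map_const_mul_withDensity hg ht,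
          Measure.map_apply (measurable_const_mul t) hs]
        rfl
    _ = ∫⁻ x in s, ∫⁻ t, ENNReal.ofReal |t⁻¹| * g (t⁻¹ * x) ∂ρ :=
        lintegral_lintegral_swap (by fun_prop)

theorem gaussianPDF_zero_half (t : ℝ) :
    gaussianPDF 0 (1 / 2) t = ENNReal.ofReal ((√π)⁻¹ * exp (-t ^ 2)) := by
  rw [gaussianPDF, gaussianPDFReal]
  congr 1
  norm_num
  field_simp

theorem gaussianPDF_mul_gaussianPDF_inv_mul (x t : ℝ) :
    gaussianPDF 0 (1 / 2) t * (ENNReal.ofReal |t⁻¹| * gaussianPDF 0 (1 / 2) (t⁻¹ * x))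
      = ENNReal.ofReal π⁻¹ * ENNReal.ofReal (exp (-t ^ 2 - |x| ^ 2 / t ^ 2) / |t|) := by
  rw [gaussianPDF_zero_half, gaussianPDF_zero_half, ← ENNReal.ofReal_mul (abs_nonneg _),
    ← ENNReal.ofReal_mul (by positivity), ← ENNReal.ofReal_mul (by positivity)]
  congr 1
  have hπ : (√π)⁻¹ * (√π)⁻¹ = π⁻¹ := by rw [← mul_inv, mul_self_sqrt pi_pos.le]
  rw [sub_eq_add_neg, exp_add, sq_abs, abs_inv, ← hπ]
  ring_nf

theorem gaussianReal_mconv_gaussianReal_half :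
    gaussianReal 0 (1 / 2) ∗ₘ gaussianReal 0 (1 / 2) = volume.withDensity fun x =>
      ENNReal.ofReal (2 / π * ∫ u in Ioi 0, exp (-(2 * |x|) * cosh u)) := by
  have hν : gaussianReal 0 (1 / 2) = volume.withDensity (gaussianPDF 0 (1 / 2)) :=
    gaussianReal_of_var_ne_zero 0 (by norm_num)
  have hν_zero : gaussianReal 0 (1 / 2) {0} = 0 := by
    rw [hν]
    exact withDensity_absolutelyContinuous _ _ Real.volume_singleton
  nth_rw 2 [hν]
  rw [mconv_volume_withDensity hν_zero (measurable_gaussianPDF 0 _)]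
  -- At `x = 0` the Bochner integral diverges and takes the junk value `0`, so the densities
  -- agree only almost everywhere.
  refine withDensity_congr_ae ?_
  filter_upwards [measure_eq_zero_iff_ae_notMem.1 (Real.volume_singleton (a := 0))]
    with x (hx : x ≠ 0)
  calc ∫⁻ t, ENNReal.ofReal |t⁻¹| * gaussianPDF 0 (1 / 2) (t⁻¹ * x) ∂gaussianReal 0 (1 / 2)
      = ∫⁻ t, ENNReal.ofReal π⁻¹ * ENNReal.ofReal (exp (-t ^ 2 - |x| ^ 2 / t ^ 2) / |t|) := by
        rw [hν, lintegral_withDensity_eq_lintegral_mul _ (measurable_gaussianPDF _ _) (by fun_prop)]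
        exact lintegral_congr fun t => gaussianPDF_mul_gaussianPDF_inv_mul x t
    _ = ENNReal.ofReal π⁻¹ * (2 * ∫⁻ u in Ioi 0, ENNReal.ofReal (exp (-(2 * |x|) * cosh u))) := by
        rw [lintegral_const_mul' _ _ ENNReal.ofReal_ne_top,
          lintegral_exp_neg_sq_sub_sq_div_sq_div_abs (abs_pos.2 hx)]
    _ = ENNReal.ofReal (2 / π * ∫ u in Ioi 0, exp (-(2 * |x|) * cosh u)) := by
        rw [ENNReal.ofReal_mul (by positivity), ofReal_integral_eq_lintegral_ofReal
          (integrableOn_exp_neg_mul_cosh (by positivity)) (ae_of_all _ fun u => (exp_pos _).le),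
          div_eq_mul_inv, ENNReal.ofReal_mul zero_le_two, ENNReal.ofReal_ofNat]
        ring

/-- If `X` and `Y` are independent real Gaussian random variables, each with
mean 0 and variance 1/2, then the law of `X * Y` is absolutely continuous with respect to
Lebesgue measure, with a density `q₁` satisfying
`q₁ x = (2/π) ∫₀^∞ exp(−2|x| cosh u) du` for every `x ≠ 0`
(this equals `(2/π) K₀(2|x|)` with `K₀` the modified Bessel function of the second kind). -/
theorem density_product_of_gaussians
    {Ω : Type*} [MeasurableSpace Ω] (μ : Measure Ω) [IsProbabilityMeasure μ]
    (X Y : Ω → ℝ)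
    (hX : Measure.map X μ = gaussianReal 0 (1/2))
    (hY : Measure.map Y μ = gaussianReal 0 (1/2))
    (hXY : IndepFun X Y μ) :
    Measure.map (fun ω => X ω * Y ω) μ ≪ volume ∧
    ∃ q₁ : ℝ → ℝ≥0∞,
      Measure.map (fun ω => X ω * Y ω) μ = volume.withDensity q₁ ∧
      ∀ x : ℝ, x ≠ 0 →
        q₁ x = ENNReal.ofReal
          ((2 / Real.pi) * ∫ u in Set.Ioi (0:ℝ), Real.exp (-(2 * |x|) * Real.cosh u)) := by
  have hX_meas : AEMeasurable X μ := .of_map_ne_zero (by simp [hX, NeZero.ne])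
  have hY_meas : AEMeasurable Y μ := .of_map_ne_zero (by simp [hY, NeZero.ne])
  have h_law : μ.map (fun ω => X ω * Y ω) = volume.withDensity fun x =>
      ENNReal.ofReal (2 / π * ∫ u in Ioi 0, exp (-(2 * |x|) * cosh u)) := by
    refine (hXY.map_mul_eq_map_mconv_map₀ hX_meas hY_meas).trans ?_
    rw [hX, hY, gaussianReal_mconv_gaussianReal_half]
  exact ⟨h_law ▸ withDensity_absolutelyContinuous _ _, _, h_law, fun _ _ => rfl⟩
end

section
/- Let a ≥ 0 be real and let Z = X + iY where X and Y are independent real Gaussian random variables with mean 0 and variance 1/2. Then the variance of the random variable log(1 + a) + 1 − |√a · Z − 1|²/(1 + a) equals a(a + 2)/(1 + a)² = 1 − 1/(1 + a)². -/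
open MeasureTheory ProbabilityTheory Real

lemma intexp (n : ℕ) : Integrable (fun x : ℝ => x ^ n * rexp (-x ^ 2)) := by
  have h := integrable_rpow_mul_exp_neg_mul_sq (b := 1) one_pos
    (s := (n : ℝ)) (lt_of_lt_of_le neg_one_lt_zero (Nat.cast_nonneg n))
  simpa [Real.rpow_natCast, neg_mul, one_mul] using h

lemma J0 : ∫ x : ℝ, rexp (-x ^ 2) = √π := by
  simpa using integral_gaussian 1

lemma J1 : ∫ x : ℝ, x * rexp (-x ^ 2) = 0 := by
  have h := MeasureTheory.integral_neg_eq_self (fun x : ℝ => x * rexp (-x ^ 2)) volume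
  simp only [neg_sq, neg_mul] at h
  rw [integral_neg] at h
  linarith

lemma J3 : ∫ x : ℝ, x ^ 3 * rexp (-x ^ 2) = 0 := by
  have h := MeasureTheory.integral_neg_eq_self (fun x : ℝ => x ^ 3 * rexp (-x ^ 2)) volume
  simp only [neg_sq, show ∀ x:ℝ, (-x)^3 = -(x^3) from fun x => by ring, neg_mul] at h
  rw [integral_neg] at h
  linarith

lemma G32 : Real.Gamma (3 / 2) = √π / 2 := by
  rw [show (3 / 2 : ℝ) = 1 / 2 + 1 by norm_num, Real.Gamma_add_one (by norm_num),
    Real.Gamma_one_half_eq]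
  ring

lemma G52 : Real.Gamma (5 / 2) = 3 * √π / 4 := by
  rw [show (5 / 2 : ℝ) = 3 / 2 + 1 by norm_num, Real.Gamma_add_one (by norm_num), G32]
  ring

lemma rpow_nat_Ioi {n : ℕ} : ∀ x ∈ Set.Ioi (0:ℝ), x ^ (n : ℝ) * rexp (-x ^ (2:ℝ)) = x ^ n * rexp (-x ^ 2) := by
  intro x hx
  rw [Real.rpow_natCast, show (2:ℝ) = ((2:ℕ):ℝ) by norm_num, Real.rpow_natCast]

lemma Jhalf (n : ℕ) : ∫ x in Set.Ioi (0:ℝ), x ^ n * rexp (-x ^ 2)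
    = 1 / 2 * Real.Gamma (((n : ℝ) + 1) / 2) := by
  rw [← setIntegral_congr_fun measurableSet_Ioi rpow_nat_Ioi]
  exact integral_rpow_mul_exp_neg_rpow two_pos
    (lt_of_lt_of_le neg_one_lt_zero (Nat.cast_nonneg n))

lemma J2 : ∫ x : ℝ, x ^ 2 * rexp (-x ^ 2) = √π / 2 := by
  have h := integral_comp_abs (f := fun t : ℝ => t ^ 2 * rexp (-t ^ 2))
  simp only [sq_abs] at h
  rw [h, Jhalf 2]
  rw [show ((2:ℕ):ℝ) + 1 = 3 by norm_num, G32]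
  ring

lemma J4 : ∫ x : ℝ, x ^ 4 * rexp (-x ^ 2) = 3 * √π / 4 := by
  have h := integral_comp_abs (f := fun t : ℝ => t ^ 4 * rexp (-t ^ 2))
  simp only [sq_abs, show ∀ x : ℝ, |x| ^ 4 = x ^ 4 from fun x => by
    rw [show (4:ℕ) = 2*2 from rfl, pow_mul, pow_mul, sq_abs]] at h
  rw [h, Jhalf 4]
  rw [show ((4:ℕ):ℝ) + 1 = 5 by norm_num, G52]
  ring

noncomputable def Wgt : ℝ → NNReal := fun x => Real.toNNReal ((√π)⁻¹ * rexp (-x ^ 2))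

lemma Wgt_meas : Measurable Wgt := by
  unfold Wgt
  fun_prop

lemma nu_withDensity : gaussianReal 0 (1/2) =
    (volume : Measure ℝ).withDensity (fun x => ((Wgt x : NNReal) : ENNReal)) := by
  rw [gaussianReal_of_var_ne_zero _ (by norm_num)]
  congr 1
  funext x
  rw [gaussianPDF]
  show ENNReal.ofReal _ = ENNReal.ofReal _
  congr 1
  unfold gaussianPDFReal
  push_cast
  norm_num
  have h2 : (√2:ℝ) ≠ 0 := by positivity
  field_simp

lemma Wgt_coe (x : ℝ) : ((Wgt x : NNReal) : ℝ) = (√π)⁻¹ * rexp (-x ^ 2) :=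
  Real.coe_toNNReal _ (by positivity)

lemma integrable_nu_iff {f : ℝ → ℝ} : Integrable f (gaussianReal 0 (1/2)) ↔
    Integrable (fun x => (√π)⁻¹ * rexp (-x ^ 2) * f x) volume := by
  rw [nu_withDensity, integrable_withDensity_iff_integrable_smul Wgt_meas]
  constructor <;> intro h <;> refine h.congr (Filter.Eventually.of_forall fun x => ?_)
  · simp only [NNReal.smul_def, Wgt_coe, smul_eq_mul]
  · simp only [NNReal.smul_def, Wgt_coe, smul_eq_mul]

lemma integral_nu (f : ℝ → ℝ) : ∫ x, f x ∂(gaussianReal 0 (1/2))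
    = (√π)⁻¹ * ∫ x, rexp (-x ^ 2) * f x := by
  rw [nu_withDensity, integral_withDensity_eq_integral_smul Wgt_meas f]
  rw [show (fun x => Wgt x • f x) = fun x => (√π)⁻¹ * (rexp (-x ^ 2) * f x) from
    funext fun x => by simp only [NNReal.smul_def, Wgt_coe, smul_eq_mul]; ring]
  exact integral_const_mul _ _

lemma intexp' : Integrable (fun x : ℝ => rexp (-x ^ 2)) := by simpa using intexp 0

lemma intexp1 : Integrable (fun x : ℝ => x * rexp (-x ^ 2)) := by simpa using intexp 1

lemma integrable_poly_nu (c0 c1 c2 c3 c4 : ℝ) :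
    Integrable (fun x => c0 + c1*x + c2*x^2 + c3*x^3 + c4*x^4) (gaussianReal 0 (1/2)) := by
  rw [integrable_nu_iff]
  have heq : (fun x : ℝ => (√π)⁻¹ * rexp (-x ^ 2) * (c0 + c1*x + c2*x^2 + c3*x^3 + c4*x^4))
      = fun x => (√π)⁻¹ * ((c0 * rexp (-x ^ 2) + c1 * (x * rexp (-x ^ 2))
        + c2 * (x ^ 2 * rexp (-x ^ 2)) + c3 * (x ^ 3 * rexp (-x ^ 2)))
        + c4 * (x ^ 4 * rexp (-x ^ 2))) := funext fun x => by ring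
  rw [heq]
  exact (((((intexp'.const_mul c0).add (intexp1.const_mul c1)).add
    ((intexp 2).const_mul c2)).add ((intexp 3).const_mul c3)).add
    ((intexp 4).const_mul c4)).const_mul _

lemma integral_poly_nu (c0 c1 c2 c3 c4 : ℝ) :
    ∫ x, (c0 + c1*x + c2*x^2 + c3*x^3 + c4*x^4) ∂(gaussianReal 0 (1/2))
      = c0 + c2 / 2 + 3 * c4 / 4 := by
  rw [integral_nu]
  have heq : (fun x : ℝ => rexp (-x ^ 2) * (c0 + c1*x + c2*x^2 + c3*x^3 + c4*x^4))
      = fun x => (c0 * rexp (-x ^ 2) + c1 * (x * rexp (-x ^ 2))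
        + c2 * (x ^ 2 * rexp (-x ^ 2)) + c3 * (x ^ 3 * rexp (-x ^ 2)))
        + c4 * (x ^ 4 * rexp (-x ^ 2)) := funext fun x => by ring
  rw [heq]
  have iA : Integrable (fun x : ℝ => c0 * rexp (-x ^ 2) + c1 * (x * rexp (-x ^ 2))
      + c2 * (x ^ 2 * rexp (-x ^ 2)) + c3 * (x ^ 3 * rexp (-x ^ 2))) volume := by
    exact (((intexp'.const_mul c0).add (intexp1.const_mul c1)).add
      ((intexp 2).const_mul c2)).add ((intexp 3).const_mul c3)
  have iB : Integrable (fun x : ℝ => c0 * rexp (-x ^ 2) + c1 * (x * rexp (-x ^ 2))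
      + c2 * (x ^ 2 * rexp (-x ^ 2))) volume := by
    exact ((intexp'.const_mul c0).add (intexp1.const_mul c1)).add ((intexp 2).const_mul c2)
  have iC : Integrable (fun x : ℝ => c0 * rexp (-x ^ 2) + c1 * (x * rexp (-x ^ 2))) volume := by
    exact (intexp'.const_mul c0).add (intexp1.const_mul c1)
  rw [integral_add iA ((intexp 4).const_mul c4),
    integral_add iB ((intexp 3).const_mul c3),
    integral_add iC ((intexp 2).const_mul c2),
    integral_add (intexp'.const_mul c0) (intexp1.const_mul c1)]
  simp only [MeasureTheory.integral_const_mul]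
  rw [J0, J1, J2, J3, J4]
  have hπ : (0:ℝ) < √π := Real.sqrt_pos.mpr Real.pi_pos
  field_simp
  ring

lemma memLp_quad_nu (c0 c1 c2 : ℝ) :
    MemLp (fun x => c0 + c1*x + c2*x^2) 2 (gaussianReal 0 (1/2)) := by
  refine (memLp_two_iff_integrable_sq ?_).mpr ?_
  · exact (by fun_prop : Measurable fun x : ℝ => c0 + c1*x + c2*x^2).aestronglyMeasurable
  · exact (integrable_poly_nu (c0^2) (2*c0*c1) (c1^2+2*c0*c2) (2*c1*c2) (c2^2)).congr
      (Filter.Eventually.of_forall fun x => by ring)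

lemma variance_quad_nu (c0 c1 c2 : ℝ) :
    variance (fun x => c0 + c1*x + c2*x^2) (gaussianReal 0 (1/2))
      = c1^2/2 + c2^2/2 := by
  rw [variance_eq_sub (memLp_quad_nu c0 c1 c2)]
  have h1 : ∫ x, ((fun x => c0 + c1*x + c2*x^2) ^ 2) x ∂(gaussianReal 0 (1/2))
      = ∫ x, ((c0^2) + (2*c0*c1)*x + (c1^2+2*c0*c2)*x^2 + (2*c1*c2)*x^3 + (c2^2)*x^4)
        ∂(gaussianReal 0 (1/2)) := by
    refine integral_congr_ae (Filter.Eventually.of_forall fun x => ?_)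
    simp only [Pi.pow_apply]
    ring
  have h2 : ∫ x, (c0 + c1*x + c2*x^2) ∂(gaussianReal 0 (1/2))
      = ∫ x, (c0 + c1*x + c2*x^2 + 0*x^3 + 0*x^4) ∂(gaussianReal 0 (1/2)) := by
    refine integral_congr_ae (Filter.Eventually.of_forall fun x => ?_)
    ring
  rw [h1, h2, integral_poly_nu, integral_poly_nu]
  ring

lemma variance_const_add {Ω : Type*} [MeasurableSpace Ω] {μ : Measure Ω}
    [IsProbabilityMeasure μ] {f : Ω → ℝ} (hf : MemLp f 2 μ) (C : ℝ) :
    variance (fun ω => C + f ω) μ = variance f μ := by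
  have hfi : Integrable f μ := hf.integrable one_le_two
  have hf' : MemLp (fun ω => C + f ω) 2 μ := by exact (memLp_const C).add hf
  rw [variance_eq_sub hf', variance_eq_sub hf]
  have h1 : ∫ ω, ((fun ω => C + f ω) ^ 2) ω ∂μ
      = ∫ ω, (C^2 + (2*C) * f ω + f ω ^ 2) ∂μ := by
    refine integral_congr_ae (Filter.Eventually.of_forall fun ω => ?_)
    simp only [Pi.pow_apply]
    ring
  have iA : Integrable (fun ω => C^2 + (2*C) * f ω) μ := by
    exact (integrable_const _).add (hfi.const_mul _)
  rw [h1, integral_add iA hf.integrable_sq,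
    integral_add (integrable_const _) (hfi.const_mul _),
    integral_add (integrable_const C) hfi,
    MeasureTheory.integral_const_mul, integral_const, integral_const]
  simp only [measure_univ, probReal_univ, ENNReal.toReal_one, smul_eq_mul, one_mul]
  have h2 : ∫ ω, ((fun ω => f ω) ^ 2) ω ∂μ = ∫ ω, f ω ^ 2 ∂μ := by
    refine integral_congr_ae (Filter.Eventually.of_forall fun ω => ?_)
    simp [Pi.pow_apply]
  rw [h2]
  ring

/-- For `a ≥ 0` and `Z = X + iY` with `X, Y` independent real Gaussians of
mean 0 and variance 1/2, the variance of
`log(1 + a) + 1 − |√a · Z − 1|²/(1 + a)` equals `a(a + 2)/(1 + a)² = 1 − 1/(1 + a)²`. -/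
theorem variance_information_density
    {Ω : Type*} [MeasurableSpace Ω] (μ : Measure Ω) [IsProbabilityMeasure μ]
    (a : ℝ) (ha : 0 ≤ a) (X Y : Ω → ℝ)
    (hX : Measure.map X μ = gaussianReal 0 (1/2))
    (hY : Measure.map Y μ = gaussianReal 0 (1/2))
    (hXY : IndepFun X Y μ) :
    variance (fun ω => Real.log (1 + a) + 1
        - ‖(Real.sqrt a : ℂ) * (X ω + Y ω * Complex.I) - 1‖ ^ 2 / (1 + a)) μ
      = a * (a + 2) / (1 + a) ^ 2 ∧
    a * (a + 2) / (1 + a) ^ 2 = 1 - 1 / (1 + a) ^ 2 := by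
  have h1a : (1 + a) ≠ 0 := by positivity
  refine ⟨?_, by field_simp; ring⟩
  -- ae-measurability of X and Y
  have hXae : AEMeasurable X μ := by
    by_contra hc
    rw [Measure.map_of_not_aemeasurable hc] at hX
    have := congrArg (fun m : Measure ℝ => m Set.univ) hX
    simp [measure_univ] at this
  have hYae : AEMeasurable Y μ := by
    by_contra hc
    rw [Measure.map_of_not_aemeasurable hc] at hY
    have := congrArg (fun m : Measure ℝ => m Set.univ) hY
    simp [measure_univ] at this
  set gq : ℝ → ℝ := fun x => 0 + (-(2*√a))*x + a*x^2 with hgq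
  set hq : ℝ → ℝ := fun y => 0 + 0*y + a*y^2 with hhq
  have hgm : Measurable gq := by fun_prop
  have hhm : Measurable hq := by fun_prop
  have hGmem : MemLp (gq ∘ X) 2 μ :=
    (memLp_map_measure_iff hgm.aestronglyMeasurable hXae).mp
      (by rw [hX]; exact memLp_quad_nu _ _ _)
  have hHmem : MemLp (hq ∘ Y) 2 μ :=
    (memLp_map_measure_iff hhm.aestronglyMeasurable hYae).mp
      (by rw [hY]; exact memLp_quad_nu _ _ _)
  have hindep : IndepFun (gq ∘ X) (hq ∘ Y) μ := hXY.comp hgm hhm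
  have hS : MemLp (fun ω => gq (X ω) + hq (Y ω)) 2 μ := by exact hGmem.add hHmem
  -- rewrite the random variable
  have hfun : (fun ω => Real.log (1 + a) + 1
        - ‖(Real.sqrt a : ℂ) * (X ω + Y ω * Complex.I) - 1‖ ^ 2 / (1 + a))
      = fun ω => (Real.log (1 + a) + 1 - 1/(1+a))
          + (-(1+a)⁻¹) * (gq (X ω) + hq (Y ω)) := by
    funext ω
    have habs : ‖(Real.sqrt a : ℂ) * (X ω + Y ω * Complex.I) - 1‖ ^ 2
        = (√a * X ω - 1)^2 + (√a * Y ω)^2 := by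
      rw [Complex.sq_norm, Complex.normSq_apply]
      simp [Complex.mul_re, Complex.mul_im]
      ring
    rw [habs, hgq, hhq]
    have hsq : √a * √a = a := Real.mul_self_sqrt ha
    set s := √a with hs
    rw [← hsq]
    ring
  rw [hfun, variance_const_add (hS.const_mul _) _]
  have hsmul : (fun ω => (-(1+a)⁻¹) * (gq (X ω) + hq (Y ω)))
      = (-(1+a)⁻¹) • (fun ω => gq (X ω) + hq (Y ω)) := rfl
  rw [hsmul, variance_smul]
  have hva : variance (fun ω => gq (X ω) + hq (Y ω)) μ
      = variance (gq ∘ X) μ + variance (hq ∘ Y) μ := by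
    exact hindep.variance_add hGmem hHmem
  rw [hva]
  have hvg : variance (gq ∘ X) μ = variance gq (gaussianReal 0 (1/2)) := by
    refine IdentDistrib.variance_eq ⟨hgm.comp_aemeasurable hXae, ?_, ?_⟩
    · rw [← hX]; exact hgm.aemeasurable
    · rw [← hX]
      exact (AEMeasurable.map_map_of_aemeasurable hgm.aemeasurable hXae).symm
  have hvh : variance (hq ∘ Y) μ = variance hq (gaussianReal 0 (1/2)) := by
    refine IdentDistrib.variance_eq ⟨hhm.comp_aemeasurable hYae, ?_, ?_⟩
    · rw [← hY]; exact hhm.aemeasurable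
    · rw [← hY]
      exact (AEMeasurable.map_map_of_aemeasurable hhm.aemeasurable hYae).symm
  rw [hvg, hvh, hgq, hhq, variance_quad_nu, variance_quad_nu]
  have h4 : (-(2*√a))^2 = 4*a := by
    rw [show (-(2*√a))^2 = 4*(√a^2) by ring, Real.sq_sqrt ha]
  rw [h4]
  field_simp
  ring
end
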